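/- arXiv:2509.14905 — 6 statements merged into one kernel-verified Lean document; each statement's English description precedes it below -/
import Mathlib

section
/- Let N ≥ 2 be an integer, Δ > 0 a real number, and x ∈ ℝ^N a vector satisfying |x_{n+1} − x_n| ≤ Δ for all n = 1,…,N−1. Then var(x) ≤ (N² − 1)Δ²/12, and equality holds if x_{n+1} − x_n = Δ for all n = 1,…,N−1. -/
/-- Mean of the first `N` entries of a real sequence. -/
noncomputable def vmean (N : ℕ) (x : ℕ → ℝ) : ℝ :=
  (∑ n ∈ Finset.range N, x n) / (N : ℝ)

/-- Variance of the first `N` entries of a real sequence. -/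
noncomputable def vvar (N : ℕ) (x : ℕ → ℝ) : ℝ :=
  (∑ n ∈ Finset.range N, (x n) ^ 2) / (N : ℝ) - (vmean N x) ^ 2

lemma aux_sum_id (N : ℕ) : ∑ n ∈ Finset.range N, (n : ℝ) = N * (N - 1) / 2 := by
  induction N with
  | zero => simp
  | succ n ih => rw [Finset.sum_range_succ, ih]; push_cast; ring

lemma aux_sum_sq (N : ℕ) :
    ∑ n ∈ Finset.range N, (n : ℝ) ^ 2 = N * (N - 1) * (2 * N - 1) / 6 := by
  induction N with
  | zero => simp
  | succ n ih => rw [Finset.sum_range_succ, ih]; push_cast; ring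

lemma aux_sum_sub_sq (N : ℕ) (f : ℕ → ℝ) :
    ∑ i ∈ Finset.range N, ∑ j ∈ Finset.range N, (f i - f j) ^ 2
      = 2 * N * (∑ n ∈ Finset.range N, f n ^ 2)
        - 2 * (∑ n ∈ Finset.range N, f n) ^ 2 := by
  have h1 : ∀ i, ∑ j ∈ Finset.range N, (f i - f j) ^ 2
      = N * f i ^ 2 - 2 * f i * (∑ n ∈ Finset.range N, f n)
        + (∑ n ∈ Finset.range N, f n ^ 2) := by
    intro i
    have : ∀ j, (f i - f j) ^ 2 = f i ^ 2 - 2 * f i * f j + f j ^ 2 := fun j => by ring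
    simp only [this, Finset.sum_add_distrib, Finset.sum_sub_distrib, Finset.sum_const,
      Finset.card_range, nsmul_eq_mul, ← Finset.mul_sum]
  rw [Finset.sum_congr rfl (fun i _ => h1 i)]
  simp only [Finset.sum_add_distrib, Finset.sum_sub_distrib, Finset.sum_const,
    Finset.card_range, nsmul_eq_mul, ← Finset.mul_sum, ← Finset.sum_mul]
  ring

/-- if `N ≥ 2`, `Δ > 0` and `|x_{n+1} - x_n| ≤ Δ` for all adjacent pairs,
then `var(x) ≤ (N² - 1)Δ²/12`, with equality if all increments equal `Δ`. -/
theorem var_le_of_bounded_steps (N : ℕ) (hN : 2 ≤ N) (Δ : ℝ) (hΔ : 0 < Δ)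
    (x : ℕ → ℝ) (hstep : ∀ n, n + 1 < N → |x (n + 1) - x n| ≤ Δ) :
    vvar N x ≤ ((N : ℝ) ^ 2 - 1) * Δ ^ 2 / 12 ∧
      ((∀ n, n + 1 < N → x (n + 1) - x n = Δ) →
        vvar N x = ((N : ℝ) ^ 2 - 1) * Δ ^ 2 / 12) := by
  have hN0 : (N : ℝ) ≠ 0 := by positivity
  set S := ∑ n ∈ Finset.range N, x n with hS
  set Q := ∑ n ∈ Finset.range N, x n ^ 2 with hQ
  have hvv : vvar N x = Q / N - (S / N) ^ 2 := rfl
  constructor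
  · -- inequality
    have tele : ∀ i j : ℕ, i ≤ j → j < N → |x j - x i| ≤ ((j : ℝ) - i) * Δ := by
      intro i j hij hjN
      induction j, hij using Nat.le_induction with
      | base => simp
      | succ j hij ih =>
        have h1 : |x (j + 1) - x i| ≤ |x (j + 1) - x j| + |x j - x i| := by
          have := abs_sub_le (x (j+1)) (x j) (x i); linarith [this]
        have h2 := hstep j hjN
        have h3 := ih (lt_trans (Nat.lt_succ_self j) hjN)
        push_cast
        calc |x (j + 1) - x i| ≤ |x (j + 1) - x j| + |x j - x i| := h1
          _ ≤ Δ + ((j : ℝ) - i) * Δ := add_le_add h2 h3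
          _ = ((j : ℝ) + 1 - i) * Δ := by ring
    have pair : ∀ i ∈ Finset.range N, ∀ j ∈ Finset.range N,
        (x i - x j) ^ 2 ≤ ((i : ℝ) - j) ^ 2 * Δ ^ 2 := by
      intro i hi j hj
      rw [Finset.mem_range] at hi hj
      rcases le_total i j with h | h
      · have := tele i j h hj
        have h0 : (0:ℝ) ≤ ((j:ℝ) - i) * Δ := le_trans (abs_nonneg _) this
        have : |x j - x i| ^ 2 ≤ (((j:ℝ) - i) * Δ) ^ 2 := by
          apply pow_le_pow_left₀ (abs_nonneg _) this
        rw [sq_abs] at this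
        nlinarith [this]
      · have := tele j i h hi
        have : |x i - x j| ^ 2 ≤ (((i:ℝ) - j) * Δ) ^ 2 := by
          apply pow_le_pow_left₀ (abs_nonneg _) this
        rw [sq_abs] at this
        nlinarith [this]
    have key : 2 * N * Q - 2 * S ^ 2
        ≤ Δ ^ 2 * (2 * N * (∑ n ∈ Finset.range N, (n : ℝ) ^ 2)
            - 2 * (∑ n ∈ Finset.range N, (n : ℝ)) ^ 2) := by
      have h1 := aux_sum_sub_sq N x
      have h2 := aux_sum_sub_sq N (fun n => (n : ℝ))
      rw [← h1]
      calc ∑ i ∈ Finset.range N, ∑ j ∈ Finset.range N, (x i - x j) ^ 2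
          ≤ ∑ i ∈ Finset.range N, ∑ j ∈ Finset.range N, ((i : ℝ) - j) ^ 2 * Δ ^ 2 := by
            apply Finset.sum_le_sum
            intro i hi
            exact Finset.sum_le_sum (fun j hj => pair i hi j hj)
        _ = Δ ^ 2 * ∑ i ∈ Finset.range N, ∑ j ∈ Finset.range N, ((i : ℝ) - j) ^ 2 := by
            rw [Finset.mul_sum]
            refine Finset.sum_congr rfl fun i _ => ?_
            rw [Finset.mul_sum]
            exact Finset.sum_congr rfl fun j _ => by ring
        _ = Δ ^ 2 * (2 * N * (∑ n ∈ Finset.range N, (n : ℝ) ^ 2)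
            - 2 * (∑ n ∈ Finset.range N, (n : ℝ)) ^ 2) := by rw [h2]
    rw [aux_sum_id, aux_sum_sq] at key
    have hNR : (0:ℝ) < (N : ℝ) := by positivity
    have heq2 : Q / N - (S / N) ^ 2 = (2 * N * Q - 2 * S ^ 2) / (2 * N ^ 2) := by
      field_simp
    rw [hvv, heq2, div_le_div_iff₀ (by positivity) (by norm_num)]
    nlinarith [key]
  · -- equality
    intro heq
    have hx : ∀ n, n < N → x n = x 0 + n * Δ := by
      intro n hn
      induction n with
      | zero => simp
      | succ k ih =>
        have hk : k < N := lt_trans (Nat.lt_succ_self k) hn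
        have := heq k hn
        have := ih hk
        push_cast
        linarith
    have hSe : S = N * x 0 + Δ * (N * (N - 1) / 2) := by
      rw [hS, Finset.sum_congr rfl (fun n hn => hx n (Finset.mem_range.mp hn))]
      rw [Finset.sum_add_distrib, Finset.sum_const, Finset.card_range, nsmul_eq_mul]
      rw [← Finset.sum_mul, aux_sum_id]
      ring
    have hQe : Q = N * x 0 ^ 2 + 2 * x 0 * Δ * (N * (N - 1) / 2)
        + Δ ^ 2 * (N * (N - 1) * (2 * N - 1) / 6) := by
      rw [hQ, Finset.sum_congr rfl (fun n hn => by
        rw [hx n (Finset.mem_range.mp hn)])]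
      have : ∀ n : ℕ, (x 0 + n * Δ) ^ 2
          = x 0 ^ 2 + 2 * x 0 * Δ * n + Δ ^ 2 * (n : ℝ) ^ 2 := fun n => by ring
      simp only [this, Finset.sum_add_distrib, Finset.sum_const, Finset.card_range,
        nsmul_eq_mul, ← Finset.mul_sum]
      rw [aux_sum_id, aux_sum_sq]
    rw [hvv, hSe, hQe]
    field_simp
    ring
end

section
/- (Theorem 1, time-constrained regime) Let N ≥ 2 be an integer and A, Δ > 0 real numbers with A ≥ (N−1)Δ. Consider feasible trajectories x ∈ ℝ^N, i.e. 0 ≤ x_n ≤ A for all n and |x_{n+1} − x_n| ≤ Δ for n = 1,…,N−1. Then the maximum of var(x) over all feasible trajectories equals (N² − 1)Δ²/12, and it is attained exactly by every arithmetic progression x_n = x_1 + (n−1)Δ with initial value 0 ≤ x_1 ≤ A − (N−1)Δ (such trajectories are feasible and achieve the maximum). -/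
open Finset

/-- A feasible 1D movable-antenna trajectory: all of the first `N` positions lie in `[0, A]`
and adjacent positions differ by at most `Δ`. -/
def Feasible (N : ℕ) (A Δ : ℝ) (x : ℕ → ℝ) : Prop :=
  (∀ n < N, 0 ≤ x n ∧ x n ≤ A) ∧ (∀ n, n + 1 < N → |x (n + 1) - x n| ≤ Δ)

lemma sum_sq_diff (N : ℕ) (x : ℕ → ℝ) :
    ∑ i ∈ range N, ∑ j ∈ range N, (x i - x j)^2
      = 2 * N * (∑ i ∈ range N, (x i)^2) - 2 * (∑ i ∈ range N, x i)^2 := by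
  have h : ∀ i j : ℕ, (x i - x j)^2 = (x i)^2 - 2 * (x i * x j) + (x j)^2 := by
    intros; ring
  simp_rw [h, Finset.sum_add_distrib, Finset.sum_sub_distrib, Finset.sum_const,
    ← Finset.mul_sum, ← Finset.sum_mul, Finset.card_range, nsmul_eq_mul]
  rw [← Finset.mul_sum]
  ring

lemma vvar_eq (N : ℕ) (hN : 0 < N) (x : ℕ → ℝ) :
    vvar N x = (∑ i ∈ range N, ∑ j ∈ range N, (x i - x j)^2) / (2 * (N:ℝ)^2) := by
  have hN' : (N:ℝ) ≠ 0 := Nat.cast_ne_zero.mpr hN.ne'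
  rw [sum_sq_diff, vvar, vmean]
  field_simp

lemma sum_id' (N : ℕ) : ∑ i ∈ range N, (i:ℝ) = N * (N-1) / 2 := by
  induction N with
  | zero => simp
  | succ n ih => rw [Finset.sum_range_succ, ih]; push_cast; ring

lemma sum_sq' (N : ℕ) : ∑ i ∈ range N, (i:ℝ)^2 = N * (N-1) * (2*N-1) / 6 := by
  induction N with
  | zero => simp
  | succ n ih => rw [Finset.sum_range_succ, ih]; push_cast; ring

lemma sum_sq_diff_id (N : ℕ) :
    ∑ i ∈ range N, ∑ j ∈ range N, ((i:ℝ) - (j:ℝ))^2 = (N:ℝ)^2 * ((N:ℝ)^2 - 1) / 6 := by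
  rw [sum_sq_diff N (fun i => (i:ℝ)), sum_id', sum_sq']
  ring

lemma tele (N : ℕ) (Δ : ℝ) (x : ℕ → ℝ)
    (hx : ∀ n, n + 1 < N → |x (n + 1) - x n| ≤ Δ) :
    ∀ k i, i + k < N → |x (i + k) - x i| ≤ (k:ℝ) * Δ := by
  intro k
  induction k with
  | zero => simp
  | succ m ih =>
    intro i h
    have h1 : i + m < N := by omega
    have hstep : |x (i + m + 1) - x (i + m)| ≤ Δ := hx (i + m) (by omega)
    have : |x (i + (m+1)) - x i| ≤ |x (i+m+1) - x (i+m)| + |x (i+m) - x i| := by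
      have := abs_sub_le (x (i+m+1)) (x (i+m)) (x i)
      simpa [show i + (m+1) = i + m + 1 from rfl] using this
    calc |x (i + (m+1)) - x i| ≤ Δ + (m:ℝ) * Δ := this.trans (add_le_add hstep (ih i h1))
      _ = ((m+1 : ℕ):ℝ) * Δ := by push_cast; ring

lemma pair_bound (N : ℕ) (Δ : ℝ) (x : ℕ → ℝ) (hΔ : 0 ≤ Δ)
    (hx : ∀ n, n + 1 < N → |x (n + 1) - x n| ≤ Δ)
    {i j : ℕ} (hi : i < N) (hj : j < N) :
    (x i - x j)^2 ≤ ((i:ℝ) - (j:ℝ))^2 * Δ^2 := by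
  have key : |x i - x j| ≤ |(i:ℝ) - (j:ℝ)| * Δ := by
    rcases le_total i j with hij | hij
    · have hle : (i:ℝ) ≤ (j:ℝ) := by exact_mod_cast hij
      have t := tele N Δ x hx (j - i) i (by omega)
      rw [show i + (j - i) = j from by omega, Nat.cast_sub hij] at t
      rw [abs_sub_comm, abs_sub_comm (i:ℝ),
        abs_of_nonneg (by linarith : (0:ℝ) ≤ (j:ℝ) - (i:ℝ))]
      exact t
    · have hle : (j:ℝ) ≤ (i:ℝ) := by exact_mod_cast hij
      have t := tele N Δ x hx (i - j) j (by omega)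
      rw [show j + (i - j) = i from by omega, Nat.cast_sub hij] at t
      rw [abs_of_nonneg (by linarith : (0:ℝ) ≤ (i:ℝ) - (j:ℝ))]
      exact t
  calc (x i - x j)^2 = |x i - x j|^2 := (sq_abs _).symm
    _ ≤ (|(i:ℝ) - (j:ℝ)| * Δ)^2 := by
        apply pow_le_pow_left₀ (abs_nonneg _) key
    _ = ((i:ℝ) - (j:ℝ))^2 * Δ^2 := by rw [mul_pow, sq_abs]

/-- Theorem 1, time-constrained regime: if `A ≥ (N-1)Δ`, then the maximum
of `var` over feasible trajectories is `(N² - 1)Δ²/12`, and every arithmetic progression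
`x_n = x_1 + (n-1)Δ` with `0 ≤ x_1 ≤ A - (N-1)Δ` is feasible and attains this maximum. -/
theorem tc_optimal_trajectory (N : ℕ) (hN : 2 ≤ N) (A Δ : ℝ) (hA : 0 < A) (hΔ : 0 < Δ)
    (hAΔ : ((N : ℝ) - 1) * Δ ≤ A) :
    IsGreatest {v : ℝ | ∃ x : ℕ → ℝ, Feasible N A Δ x ∧ vvar N x = v}
      (((N : ℝ) ^ 2 - 1) * Δ ^ 2 / 12) ∧
    (∀ x1 : ℝ, 0 ≤ x1 → x1 ≤ A - ((N : ℝ) - 1) * Δ →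
      Feasible N A Δ (fun n => x1 + (n : ℝ) * Δ) ∧
      vvar N (fun n => x1 + (n : ℝ) * Δ) = ((N : ℝ) ^ 2 - 1) * Δ ^ 2 / 12) := by
  have hN0 : 0 < N := by omega
  have hNR : (1:ℝ) ≤ (N:ℝ) := by exact_mod_cast Nat.one_le_iff_ne_zero.mpr hN0.ne'
  have hN' : (N:ℝ) ≠ 0 := by positivity
  -- the AP part
  have hAP : ∀ x1 : ℝ, 0 ≤ x1 → x1 ≤ A - ((N : ℝ) - 1) * Δ →
      Feasible N A Δ (fun n => x1 + (n : ℝ) * Δ) ∧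
      vvar N (fun n => x1 + (n : ℝ) * Δ) = ((N : ℝ) ^ 2 - 1) * Δ ^ 2 / 12 := by
    intro x1 hx1 hx1'
    constructor
    · constructor
      · intro n hn
        have hn1 : (n:ℝ) ≤ (N:ℝ) - 1 := by
          have : (n:ℝ) + 1 ≤ (N:ℝ) := by exact_mod_cast hn
          linarith
        refine ⟨by positivity, ?_⟩
        show x1 + (n:ℝ) * Δ ≤ A
        nlinarith
      · intro n hn
        show |x1 + ((n+1 : ℕ):ℝ) * Δ - (x1 + (n:ℝ) * Δ)| ≤ Δ
        rw [show x1 + ((n+1 : ℕ):ℝ) * Δ - (x1 + (n:ℝ) * Δ) = Δ by push_cast; ring,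
          abs_of_nonneg hΔ.le]
    · rw [vvar_eq N hN0]
      have heq : ∀ i j : ℕ, (x1 + (i:ℝ)*Δ - (x1 + (j:ℝ)*Δ))^2 = ((i:ℝ) - (j:ℝ))^2 * Δ^2 := by
        intros; ring
      simp only [heq]
      simp_rw [← Finset.sum_mul]
      rw [sum_sq_diff_id]
      field_simp
      ring
  refine ⟨⟨?_, ?_⟩, hAP⟩
  · -- membership: take x1 = 0
    have := hAP 0 le_rfl (by linarith)
    exact ⟨_, this.1, by simpa using this.2⟩
  · -- upper bound
    rintro v ⟨x, ⟨hbox, hstep⟩, rfl⟩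
    rw [vvar_eq N hN0]
    have hsum : ∑ i ∈ range N, ∑ j ∈ range N, (x i - x j)^2
        ≤ ∑ i ∈ range N, ∑ j ∈ range N, ((i:ℝ) - (j:ℝ))^2 * Δ^2 := by
      apply Finset.sum_le_sum
      intro i hi
      apply Finset.sum_le_sum
      intro j hj
      exact pair_bound N Δ x hΔ.le hstep (Finset.mem_range.mp hi) (Finset.mem_range.mp hj)
    have h2 : ∑ i ∈ range N, ∑ j ∈ range N, ((i:ℝ) - (j:ℝ))^2 * Δ^2
        = (N:ℝ)^2 * ((N:ℝ)^2 - 1) / 6 * Δ^2 := by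
      simp_rw [← Finset.sum_mul]
      rw [sum_sq_diff_id]
    rw [div_le_iff₀ (by positivity)]
    calc ∑ i ∈ range N, ∑ j ∈ range N, (x i - x j)^2
        ≤ (N:ℝ)^2 * ((N:ℝ)^2 - 1) / 6 * Δ^2 := hsum.trans_eq h2
      _ = ((N : ℝ) ^ 2 - 1) * Δ ^ 2 / 12 * (2 * (N:ℝ)^2) := by ring
end

section
/- Let N ≥ 2 be an integer and A, Δ > 0 with A < (N−1)Δ. With N_M = ⌈A/Δ⌉ − 1, N_L = ⌈(N − N_M)/2⌉, N_R = ⌊(N − N_M)/2⌋ and x^SC ∈ ℝ^N defined by x^SC_n = 0 for n ≤ N_L, x^SC_n = (n − N_L)Δ for N_L < n ≤ N − N_R, and x^SC_n = A for n > N − N_R, the variance of x^SC equals var(x^SC) = (Δ²/(6N))·N_M(N_M+1)(2N_M+1) + (A²/N)·N_R − (1/N²)·((Δ/2)·N_M(N_M+1) + N_R·A)². -/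
lemma sum_one_aux (m : ℕ) : ∑ j ∈ Finset.range m, ((j : ℝ) + 1) = (m : ℝ) * ((m : ℝ) + 1) / 2 := by
  induction m with
  | zero => simp
  | succ n ih => rw [Finset.sum_range_succ, ih]; push_cast; ring

lemma sum_two_aux (m : ℕ) :
    ∑ j ∈ Finset.range m, ((j : ℝ) + 1) ^ 2 = (m : ℝ) * ((m : ℝ) + 1) * (2 * (m : ℝ) + 1) / 6 := by
  induction m with
  | zero => simp
  | succ n ih => rw [Finset.sum_range_succ, ih]; push_cast; ring

/-- closed-form variance of the space-constrained optimal trajectory: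
`var(x^SC) = (Δ²/(6N))·N_M(N_M+1)(2N_M+1) + (A²/N)·N_R − (1/N²)((Δ/2)N_M(N_M+1) + N_R·A)²`. -/
theorem var_of_sc_trajectory (N : ℕ) (hN : 2 ≤ N) (A Δ : ℝ) (hA : 0 < A) (hΔ : 0 < Δ)
    (hAΔ : A < ((N : ℝ) - 1) * Δ) :
    let NM : ℕ := (⌈A / Δ⌉).toNat - 1
    let NL : ℕ := (N - NM + 1) / 2
    let NR : ℕ := (N - NM) / 2
    let xSC : ℕ → ℝ := fun k =>
      if k + 1 ≤ NL then 0
      else if k + 1 ≤ N - NR then ((k + 1 - NL : ℕ) : ℝ) * Δ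
      else A
    vvar N xSC =
      Δ ^ 2 / (6 * (N : ℝ)) * ((NM : ℝ) * ((NM : ℝ) + 1) * (2 * (NM : ℝ) + 1))
        + A ^ 2 / (N : ℝ) * (NR : ℝ)
        - (1 / (N : ℝ) ^ 2) * (Δ / 2 * ((NM : ℝ) * ((NM : ℝ) + 1)) + (NR : ℝ) * A) ^ 2 := by
  intro NM NL NR xSC
  -- bounds on the ceiling
  have hc1 : 1 ≤ ⌈A / Δ⌉ := Int.ceil_pos.mpr (div_pos hA hΔ)
  have hcN : ⌈A / Δ⌉ < (N : ℤ) := by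
    have h1 : A / Δ < (N : ℝ) - 1 := (div_lt_iff₀ hΔ).mpr hAΔ
    have h2 : (⌈A / Δ⌉ : ℝ) < A / Δ + 1 := Int.ceil_lt_add_one _
    have h3 : (⌈A / Δ⌉ : ℝ) < (N : ℝ) := by linarith
    exact_mod_cast h3
  have hNM : NM ≤ N - 2 := by
    have : NM = (⌈A / Δ⌉).toNat - 1 := rfl
    omega
  have hNL : NL = (N - NM + 1) / 2 := rfl
  have hNR : NR = (N - NM) / 2 := rfl
  have hsum : NL + NM + NR = N := by omega
  have hNRle : NL + NM = N - NR := by omega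
  -- values of xSC on the three blocks
  have hx0 : ∀ k ∈ Finset.range NL, xSC k = 0 := by
    intro k hk
    simp only [Finset.mem_range] at hk
    simp only [xSC, if_pos (by omega : k + 1 ≤ NL)]
  have hx0sq : ∀ k ∈ Finset.range NL, xSC k ^ 2 = 0 := by
    intro k hk; rw [hx0 k hk]; ring
  have hxm : ∀ j, j < NM → xSC (NL + j) = ((j : ℝ) + 1) * Δ := by
    intro j hj
    have h1 : ¬ (NL + j + 1 ≤ NL) := by omega
    have h2 : NL + j + 1 ≤ N - NR := by omega
    have h3 : NL + j + 1 - NL = j + 1 := by omega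
    simp only [xSC, if_neg h1, if_pos h2, h3]
    push_cast; ring
  have hxA : ∀ k ∈ Finset.Ico (NL + NM) N, xSC k = A := by
    intro k hk
    simp only [Finset.mem_Ico] at hk
    have h1 : ¬ (k + 1 ≤ NL) := by omega
    have h2 : ¬ (k + 1 ≤ N - NR) := by omega
    simp only [xSC, if_neg h1, if_neg h2]
  -- splitting the sum
  have hsplit : ∀ f : ℕ → ℝ, ∑ k ∈ Finset.range N, f k =
      (∑ k ∈ Finset.range NL, f k) + (∑ k ∈ Finset.Ico NL (NL + NM), f k)
        + (∑ k ∈ Finset.Ico (NL + NM) N, f k) := by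
    intro f
    rw [Finset.range_eq_Ico, ← Finset.sum_Ico_consecutive f (by omega : 0 ≤ NL + NM)
      (by omega : NL + NM ≤ N), ← Finset.sum_Ico_consecutive f (by omega : 0 ≤ NL)
      (by omega : NL ≤ NL + NM), ← Finset.range_eq_Ico]
  have hcard : (Finset.Ico (NL + NM) N).card = NR := by
    rw [Nat.card_Ico]; omega
  -- first moment
  have hS1 : ∑ k ∈ Finset.range N, xSC k = Δ * ((NM : ℝ) * (NM + 1) / 2) + (NR : ℝ) * A := by
    rw [hsplit, Finset.sum_eq_zero hx0, Finset.sum_Ico_eq_sum_range,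
      Finset.sum_eq_card_nsmul hxA, hcard]
    have : ∑ j ∈ Finset.range (NL + NM - NL), xSC (NL + j)
        = ∑ j ∈ Finset.range NM, ((j : ℝ) + 1) * Δ := by
      rw [show NL + NM - NL = NM by omega]
      exact Finset.sum_congr rfl (fun j hj => hxm j (Finset.mem_range.mp hj))
    rw [this, ← Finset.sum_mul, sum_one_aux]
    simp [nsmul_eq_mul]
    ring
  -- second moment
  have hS2 : ∑ k ∈ Finset.range N, xSC k ^ 2
      = Δ ^ 2 * ((NM : ℝ) * (NM + 1) * (2 * NM + 1) / 6) + (NR : ℝ) * A ^ 2 := by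
    rw [hsplit, Finset.sum_eq_zero hx0sq, Finset.sum_Ico_eq_sum_range]
    have hA2 : ∀ k ∈ Finset.Ico (NL + NM) N, xSC k ^ 2 = A ^ 2 := by
      intro k hk; rw [hxA k hk]
    rw [Finset.sum_eq_card_nsmul hA2, hcard]
    have : ∑ j ∈ Finset.range (NL + NM - NL), xSC (NL + j) ^ 2
        = ∑ j ∈ Finset.range NM, (((j : ℝ) + 1) * Δ) ^ 2 := by
      rw [show NL + NM - NL = NM by omega]
      exact Finset.sum_congr rfl (fun j hj => by rw [hxm j (Finset.mem_range.mp hj)])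
    rw [this]
    simp_rw [mul_pow]
    rw [← Finset.sum_mul, sum_two_aux]
    simp [nsmul_eq_mul]
    ring
  -- conclude
  have hN0 : (N : ℝ) ≠ 0 := by positivity
  rw [vvar, vmean, hS1, hS2]
  field_simp
end

section
/- Let N ≥ 2 be an integer and A, Δ > 0 with A ≤ (N−1)Δ. Suppose x ∈ ℝ^N is nondecreasing, feasible (0 ≤ x_n ≤ A for all n, and x_{n+1} − x_n ≤ Δ for all n), and maximizes var over all nondecreasing feasible trajectories, i.e. var(x) ≥ var(x') for every nondecreasing feasible x' ∈ ℝ^N. Then x_1 = 0 and x_N = A. -/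
/-!
If the range `x (N-1) - x 0` of a nondecreasing feasible trajectory is smaller than `A`, it is
also smaller than `(N-1)Δ`, so some step `x (k+1) - x k` is below `Δ`. Shifting the trajectory
down to start at `0` and lifting its tail after `k` by a small `δ > 0` keeps it feasible, and,
since the variance is `(2N²)⁻¹ ∑ᵢ ∑ⱼ (xᵢ - xⱼ)²`, strictly increases it: no pairwise distance
shrinks and the one between `k` and `k+1` grows.
-/

open Finset

theorem vvar_eq_sum_sum_sq_sub (N : ℕ) (x : ℕ → ℝ) :
    vvar N x = (∑ i ∈ range N, ∑ j ∈ range N, (x i - x j) ^ 2) / (2 * N ^ 2) := by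
  rcases N.eq_zero_or_pos with rfl | hN
  · simp [vvar, vmean]
  have hN' : (N : ℝ) ≠ 0 := by positivity
  simp only [vvar, vmean, sub_sq, sum_add_distrib, sum_sub_distrib, ← mul_sum, ← sum_mul,
    sum_const, card_range, nsmul_eq_mul]
  field_simp
  ring

theorem vvar_add_const (N : ℕ) (x : ℕ → ℝ) (c : ℝ) :
    vvar N (fun n => x n + c) = vvar N x := by
  simp only [vvar_eq_sum_sum_sq_sub, add_sub_add_right_eq_sub]

theorem vvar_lt_vvar_of_sq_sub_le {N : ℕ} {x y : ℕ → ℝ}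
    (hle : ∀ i < N, ∀ j < N, (x i - x j) ^ 2 ≤ (y i - y j) ^ 2) {i₀ j₀ : ℕ} (hi₀ : i₀ < N)
    (hj₀ : j₀ < N) (hlt : (x i₀ - x j₀) ^ 2 < (y i₀ - y j₀) ^ 2) :
    vvar N x < vvar N y := by
  have hN : (0 : ℝ) < N := by exact_mod_cast hi₀.trans_le' (Nat.zero_le _)
  rw [vvar_eq_sum_sum_sq_sub, vvar_eq_sum_sum_sq_sub]
  gcongr ?_ / _
  refine sum_lt_sum (fun i hi => sum_le_sum fun j hj => ?_) ⟨i₀, mem_range.2 hi₀, ?_⟩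
  · exact hle i (mem_range.1 hi) j (mem_range.1 hj)
  · exact sum_lt_sum (fun j hj => hle i₀ hi₀ j (mem_range.1 hj)) ⟨j₀, mem_range.2 hj₀, hlt⟩

theorem vvar_lt_vvar_add_of_monotoneOn {N : ℕ} {x d : ℕ → ℝ} (hx : MonotoneOn x (Set.Iio N))
    (hd : MonotoneOn d (Set.Iio N)) {k : ℕ} (hk : k + 1 < N) (hdk : d k < d (k + 1)) :
    vvar N x < vvar N (fun n => x n + d n) := by
  have hsq : ∀ i < N, ∀ j < N, i ≤ j →
      (x i - x j) ^ 2 ≤ (x i + d i - (x j + d j)) ^ 2 := by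
    intro i hi j hj hij
    nlinarith [hx hi hj hij, hd hi hj hij]
  refine vvar_lt_vvar_of_sq_sub_le (fun i hi j hj => ?_) hk (k.lt_succ_self.trans hk) ?_
  · rcases le_total i j with hij | hji
    · exact hsq i hi j hj hij
    · convert hsq j hj i hi hji using 1 <;> ring
  · nlinarith [hx (k.lt_succ_self.trans hk) hk k.le_succ]

theorem exists_sub_lt_of_sub_lt_mul {x : ℕ → ℝ} {Δ : ℝ} {n : ℕ} (h : x n - x 0 < n * Δ) :
    ∃ k < n, x (k + 1) - x k < Δ := by
  induction n with
  | zero => simp at h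
  | succ n ih =>
    by_cases hn : x (n + 1) - x n < Δ
    · exact ⟨n, n.lt_succ_self, hn⟩
    · obtain ⟨k, hk, hkΔ⟩ := ih (by push_cast at h; linarith)
      exact ⟨k, hk.trans n.lt_succ_self, hkΔ⟩

def tailStep (k : ℕ) (δ : ℝ) (n : ℕ) : ℝ :=
  if k < n then δ else 0

theorem tailStep_monotone (k : ℕ) {δ : ℝ} (hδ : 0 ≤ δ) : Monotone (tailStep k δ) := by
  intro a b hab
  unfold tailStep
  split_ifs <;> first | exact le_rfl | exact hδ | omega

theorem tailStep_succ_sub (k : ℕ) (δ : ℝ) (n : ℕ) :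
    tailStep k δ (n + 1) - tailStep k δ n = if n = k then δ else 0 := by
  unfold tailStep
  split_ifs <;> first | omega | ring

theorem tailStep_nonneg (k : ℕ) {δ : ℝ} (hδ : 0 ≤ δ) (n : ℕ) : 0 ≤ tailStep k δ n := by
  unfold tailStep
  split_ifs <;> first | exact le_rfl | exact hδ

theorem tailStep_le (k : ℕ) {δ : ℝ} (hδ : 0 ≤ δ) (n : ℕ) : tailStep k δ n ≤ δ := by
  unfold tailStep
  split_ifs <;> first | exact le_rfl | exact hδ

def IsMonotoneFeasible (N : ℕ) (A Δ : ℝ) (x : ℕ → ℝ) : Prop :=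
  (∀ n, n + 1 < N → x n ≤ x (n + 1)) ∧ (∀ n < N, 0 ≤ x n ∧ x n ≤ A) ∧
    (∀ n, n + 1 < N → x (n + 1) - x n ≤ Δ)

namespace IsMonotoneFeasible

variable {N : ℕ} {A Δ : ℝ} {x : ℕ → ℝ}

theorem monotoneOn (hx : IsMonotoneFeasible N A Δ x) : MonotoneOn x (Set.Iio N) :=
  monotoneOn_of_le_add_one Set.ordConnected_Iio fun n _ _ hn => hx.1 n hn

theorem shift_add_tailStep (hx : IsMonotoneFeasible N A Δ x) {k : ℕ} {δ : ℝ} (hδ : 0 ≤ δ)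
    (hδΔ : x (k + 1) - x k + δ ≤ Δ) (hδA : x (N - 1) - x 0 + δ ≤ A) :
    IsMonotoneFeasible N A Δ (fun n => x n - x 0 + tailStep k δ n) := by
  have hmon := hx.monotoneOn
  obtain ⟨hmono, -, hstep⟩ := hx
  refine ⟨fun n hn => ?_, fun n hn => ⟨?_, ?_⟩, fun n hn => ?_⟩ <;> beta_reduce
  · have := tailStep_monotone k hδ n.le_succ
    linarith [hmono n hn]
  · have h0n := hmon (by simp; omega) hn (Nat.zero_le n)
    linarith [tailStep_nonneg k hδ n]
  · have hnN := hmon hn (by simp; omega) (Nat.le_sub_one_of_lt hn)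
    linarith [tailStep_le k hδ n]
  · have hsucc := tailStep_succ_sub k δ n
    split_ifs at hsucc with hnk
    · subst hnk; linarith
    · linarith [hstep n hn]

end IsMonotoneFeasible

theorem optimal_trajectory_endpoints_general (N : ℕ) (hN : 2 ≤ N) (A Δ : ℝ)
    (hAΔ : A ≤ ((N : ℝ) - 1) * Δ) (x : ℕ → ℝ)
    (hmono : ∀ n, n + 1 < N → x n ≤ x (n + 1))
    (hbound : ∀ n < N, 0 ≤ x n ∧ x n ≤ A)
    (hstep : ∀ n, n + 1 < N → x (n + 1) - x n ≤ Δ)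
    (hopt : ∀ y : ℕ → ℝ, (∀ n, n + 1 < N → y n ≤ y (n + 1)) →
      (∀ n < N, 0 ≤ y n ∧ y n ≤ A) → (∀ n, n + 1 < N → y (n + 1) - y n ≤ Δ) →
      vvar N y ≤ vvar N x) :
    x 0 = 0 ∧ x (N - 1) = A := by
  have hx : IsMonotoneFeasible N A Δ x := ⟨hmono, hbound, hstep⟩
  by_contra hne
  have hrange : x (N - 1) - x 0 < A := by
    obtain ⟨h0, -⟩ := hbound 0 (by omega)
    obtain ⟨-, hlast⟩ := hbound (N - 1) (by omega)
    exact lt_of_le_of_ne (by linarith) fun h => hne ⟨by linarith, by linarith⟩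
  obtain ⟨k, hk, hslack⟩ := exists_sub_lt_of_sub_lt_mul (x := x) (Δ := Δ) (n := N - 1)
    (by rw [Nat.cast_pred (by omega)]; linarith)
  obtain ⟨δ, hδ, hδΔ, hδA⟩ : ∃ δ > 0, x (k + 1) - x k + δ ≤ Δ ∧ x (N - 1) - x 0 + δ ≤ A :=
    ⟨min (Δ - (x (k + 1) - x k)) (A - (x (N - 1) - x 0)), lt_min (by linarith) (by linarith),
      by linarith [min_le_left (Δ - (x (k + 1) - x k)) (A - (x (N - 1) - x 0))],
      by linarith [min_le_right (Δ - (x (k + 1) - x k)) (A - (x (N - 1) - x 0))]⟩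
  obtain ⟨hy₁, hy₂, hy₃⟩ := hx.shift_add_tailStep hδ.le hδΔ hδA
  have hlt : vvar N x < vvar N (fun n => x n - x 0 + tailStep k δ n) := by
    rw [show (fun n => x n - x 0 + tailStep k δ n) = fun n => x n + tailStep k δ n + -x 0 by
      ext; ring, vvar_add_const]
    refine vvar_lt_vvar_add_of_monotoneOn (k := k) hx.monotoneOn
      ((tailStep_monotone k hδ.le).monotoneOn _) (by omega) ?_
    simp [tailStep, hδ]
  exact (hopt _ hy₁ hy₂ hy₃).not_gt hlt

/-- if `A ≤ (N−1)Δ` and the nondecreasing feasible trajectory `x`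
maximizes the variance over all nondecreasing feasible trajectories, then `x_1 = 0`
and `x_N = A` (0-based: `x 0 = 0` and `x (N-1) = A`). -/
theorem optimal_trajectory_endpoints (N : ℕ) (hN : 2 ≤ N) (A Δ : ℝ)
    (hA : 0 < A) (hΔ : 0 < Δ) (hAΔ : A ≤ ((N : ℝ) - 1) * Δ) (x : ℕ → ℝ)
    (hmono : ∀ n, n + 1 < N → x n ≤ x (n + 1))
    (hbound : ∀ n < N, 0 ≤ x n ∧ x n ≤ A)
    (hstep : ∀ n, n + 1 < N → x (n + 1) - x n ≤ Δ)
    (hopt : ∀ y : ℕ → ℝ, (∀ n, n + 1 < N → y n ≤ y (n + 1)) →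
      (∀ n < N, 0 ≤ y n ∧ y n ≤ A) → (∀ n, n + 1 < N → y (n + 1) - y n ≤ Δ) →
      vvar N y ≤ vvar N x) :
    x 0 = 0 ∧ x (N - 1) = A :=
  optimal_trajectory_endpoints_general N hN A Δ hAΔ x hmono hbound hstep hopt
end

section
/- Let N ≥ 3 be an integer, Δ > 0, and set R = Δ/(2·sin(π/N)). Define the circular trajectory x_n = R·cos(2πn/N), y_n = R·sin(2πn/N) for n = 1,…,N. Then for any positive constants σ, λ, P, b, CRB_u(x,y) = CRB_v(x,y) = σ²λ²·sin²(π/N) / (π² P b² Δ² N). -/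
open Finset

/-- Covariance of the first `N` entries of two real sequences. -/
noncomputable def vcov (N : ℕ) (x y : ℕ → ℝ) : ℝ :=
  (∑ n ∈ Finset.range N, x n * y n) / (N : ℝ) - vmean N x * vmean N y

/-- 2D Cramér–Rao bound for the spatial AoA `u`. -/
noncomputable def CRBu (σ lam P b : ℝ) (N : ℕ) (x y : ℕ → ℝ) : ℝ :=
  σ ^ 2 * lam ^ 2 /
    (8 * Real.pi ^ 2 * P * (N : ℝ) * b ^ 2 * (vvar N x - (vcov N x y) ^ 2 / vvar N y))

/-- 2D Cramér–Rao bound for the spatial AoA `v`. -/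
noncomputable def CRBv (σ lam P b : ℝ) (N : ℕ) (x y : ℕ → ℝ) : ℝ :=
  σ ^ 2 * lam ^ 2 /
    (8 * Real.pi ^ 2 * P * (N : ℝ) * b ^ 2 * (vvar N y - (vcov N x y) ^ 2 / vvar N x))


lemma sum_exp_aux (N : ℕ) (hN : 3 ≤ N) (m : ℕ) (hm1 : 1 ≤ m) (hm2 : m < N) :
    ∑ k ∈ Finset.range N, Complex.exp (((2 * Real.pi * m * ((k:ℝ)+1) / N : ℝ) : ℂ) * Complex.I) = 0 := by
  have hN0 : (N:ℝ) ≠ 0 := by positivity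
  have hNC : (N:ℂ) ≠ 0 := Nat.cast_ne_zero.mpr (by omega)
  set θ : ℝ := 2 * Real.pi * m / N with hθ
  set ζ : ℂ := Complex.exp ((θ : ℂ) * Complex.I) with hζ
  have hpow : ∀ k : ℕ, Complex.exp (((2 * Real.pi * m * ((k:ℝ)+1) / N : ℝ) : ℂ) * Complex.I)
      = ζ ^ (k+1) := by
    intro k
    rw [hζ, ← Complex.exp_nat_mul]
    congr 1
    push_cast [hθ]
    field_simp
  have hζN : ζ ^ N = 1 := by
    rw [hζ, ← Complex.exp_nat_mul]
    have h1 : (N:ℂ) * ((θ:ℂ) * Complex.I) = (m:ℤ) * (2 * ↑Real.pi * Complex.I) := by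
      push_cast [hθ]
      field_simp
    rw [h1, Complex.exp_int_mul_two_pi_mul_I]
  have hθpos : 0 < θ := by
    have : (0:ℝ) < (m:ℝ) := by exact_mod_cast hm1
    have hπ := Real.pi_pos
    rw [hθ]; positivity
  have hθlt : θ < 2 * Real.pi := by
    rw [hθ, div_lt_iff₀ (by positivity)]
    have hπ := Real.pi_pos
    have : (m:ℝ) < N := by exact_mod_cast hm2
    nlinarith
  have hζ1 : ζ ≠ 1 := by
    intro h
    rw [hζ, Complex.exp_eq_one_iff] at h
    obtain ⟨n, hn⟩ := h
    have h2 : (θ:ℂ) = ((n * (2 * Real.pi) : ℝ) : ℂ) := by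
      have := mul_right_cancel₀ Complex.I_ne_zero (by rw [hn]; push_cast; ring :
        (θ:ℂ) * Complex.I = ((n * (2 * Real.pi) : ℝ):ℂ) * Complex.I)
      exact this
    have h3 : θ = n * (2 * Real.pi) := by exact_mod_cast h2
    have hπ := Real.pi_pos
    have hn0 : 0 < n := by
      by_contra hc
      push_neg at hc
      have : (n:ℝ) ≤ 0 := by exact_mod_cast hc
      nlinarith
    have hn1 : (1:ℝ) ≤ n := by exact_mod_cast hn0
    nlinarith
  calc ∑ k ∈ Finset.range N, Complex.exp (((2 * Real.pi * m * ((k:ℝ)+1) / N : ℝ) : ℂ) * Complex.I)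
      = ∑ k ∈ Finset.range N, ζ * ζ ^ k := by
        refine Finset.sum_congr rfl fun k _ => ?_
        rw [hpow k, pow_succ]; ring
    _ = ζ * ((ζ ^ N - 1) / (ζ - 1)) := by rw [← Finset.mul_sum, geom_sum_eq hζ1]
    _ = 0 := by rw [hζN]; simp

lemma sum_cos_aux (N : ℕ) (hN : 3 ≤ N) (m : ℕ) (hm1 : 1 ≤ m) (hm2 : m < N) :
    ∑ k ∈ Finset.range N, Real.cos (2 * Real.pi * m * ((k:ℝ)+1) / N) = 0 := by
  have h := sum_exp_aux N hN m hm1 hm2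
  have h2 : ∑ k ∈ Finset.range N, Real.cos (2 * Real.pi * m * ((k:ℝ)+1) / N)
      = (∑ k ∈ Finset.range N, Complex.exp (((2 * Real.pi * m * ((k:ℝ)+1) / N : ℝ) : ℂ) * Complex.I)).re := by
    rw [Complex.re_sum]
    exact Finset.sum_congr rfl fun k _ => (Complex.exp_ofReal_mul_I_re _).symm
  rw [h2, h]; simp

lemma sum_sin_aux (N : ℕ) (hN : 3 ≤ N) (m : ℕ) (hm1 : 1 ≤ m) (hm2 : m < N) :
    ∑ k ∈ Finset.range N, Real.sin (2 * Real.pi * m * ((k:ℝ)+1) / N) = 0 := by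
  have h := sum_exp_aux N hN m hm1 hm2
  have h2 : ∑ k ∈ Finset.range N, Real.sin (2 * Real.pi * m * ((k:ℝ)+1) / N)
      = (∑ k ∈ Finset.range N, Complex.exp (((2 * Real.pi * m * ((k:ℝ)+1) / N : ℝ) : ℂ) * Complex.I)).im := by
    rw [Complex.im_sum]
    exact Finset.sum_congr rfl fun k _ => (Complex.exp_ofReal_mul_I_im _).symm
  rw [h2, h]; simp

/-- for the circular trajectory of radius `R = Δ/(2 sin(π/N))`,
`CRB_u = CRB_v = σ²λ² sin²(π/N) / (π² P b² Δ² N)`. -/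
theorem crb_circular_trajectory (N : ℕ) (hN : 3 ≤ N) (Δ σ lam P b : ℝ)
    (hΔ : 0 < Δ) (hσ : 0 < σ) (hlam : 0 < lam) (hP : 0 < P) (hb : 0 < b) :
    let R : ℝ := Δ / (2 * Real.sin (Real.pi / (N : ℝ)))
    let x : ℕ → ℝ := fun k => R * Real.cos (2 * Real.pi * ((k : ℝ) + 1) / (N : ℝ))
    let y : ℕ → ℝ := fun k => R * Real.sin (2 * Real.pi * ((k : ℝ) + 1) / (N : ℝ))
    CRBu σ lam P b N x y
        = σ ^ 2 * lam ^ 2 * Real.sin (Real.pi / (N : ℝ)) ^ 2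
            / (Real.pi ^ 2 * P * b ^ 2 * Δ ^ 2 * (N : ℝ)) ∧
      CRBv σ lam P b N x y
        = σ ^ 2 * lam ^ 2 * Real.sin (Real.pi / (N : ℝ)) ^ 2
            / (Real.pi ^ 2 * P * b ^ 2 * Δ ^ 2 * (N : ℝ)) := by
  intro R x y
  have hπ := Real.pi_pos
  have hN0 : (0:ℝ) < (N:ℝ) := by exact_mod_cast (by omega : 0 < N)
  have hNne : (N:ℝ) ≠ 0 := ne_of_gt hN0
  have hs : 0 < Real.sin (Real.pi / (N:ℝ)) := by
    apply Real.sin_pos_of_pos_of_lt_pi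
    · positivity
    · rw [div_lt_iff₀ hN0]
      have : (3:ℝ) ≤ (N:ℝ) := by exact_mod_cast hN
      nlinarith
  set s : ℝ := Real.sin (Real.pi / (N:ℝ)) with hsdef
  have hR : R = Δ / (2 * s) := rfl
  have hRpos : 0 < R := by rw [hR]; positivity
  -- trig sums
  have hc1 : ∑ k ∈ Finset.range N, Real.cos (2 * Real.pi * ((k:ℝ)+1) / N) = 0 := by
    have := sum_cos_aux N hN 1 le_rfl (by omega)
    simpa using this
  have hs1 : ∑ k ∈ Finset.range N, Real.sin (2 * Real.pi * ((k:ℝ)+1) / N) = 0 := by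
    have := sum_sin_aux N hN 1 le_rfl (by omega)
    simpa using this
  have hc2 : ∑ k ∈ Finset.range N, Real.cos (2 * (2 * Real.pi * ((k:ℝ)+1) / N)) = 0 := by
    have := sum_cos_aux N hN 2 (by omega) (by omega)
    rw [← this]
    refine Finset.sum_congr rfl fun k _ => ?_
    congr 1
    push_cast
    ring
  have hs2 : ∑ k ∈ Finset.range N, Real.sin (2 * (2 * Real.pi * ((k:ℝ)+1) / N)) = 0 := by
    have := sum_sin_aux N hN 2 (by omega) (by omega)
    rw [← this]
    refine Finset.sum_congr rfl fun k _ => ?_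
    congr 1
    push_cast
    ring
  -- moments
  have hmx : vmean N x = 0 := by
    unfold vmean
    simp only [x, ← Finset.mul_sum, hc1, mul_zero, zero_div]
  have hmy : vmean N y = 0 := by
    unfold vmean
    simp only [y, ← Finset.mul_sum, hs1, mul_zero, zero_div]
  have hvx : vvar N x = R^2 / 2 := by
    unfold vvar
    rw [hmx]
    have : ∑ k ∈ Finset.range N, (x k)^2 = R^2 * ((N:ℝ)/2) := by
      simp only [x, mul_pow, ← Finset.mul_sum]
      congr 1
      rw [Finset.sum_congr rfl (fun k _ => Real.cos_sq _), Finset.sum_add_distrib]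
      simp only [← Finset.sum_div]
      rw [hc2]
      simp [Finset.sum_const, Finset.card_range]
    rw [this]
    field_simp
    ring
  have hvy : vvar N y = R^2 / 2 := by
    unfold vvar
    rw [hmy]
    have : ∑ k ∈ Finset.range N, (y k)^2 = R^2 * ((N:ℝ)/2) := by
      simp only [y, mul_pow, ← Finset.mul_sum]
      congr 1
      have hsq : ∀ t : ℝ, Real.sin t ^ 2 = 1/2 - Real.cos (2*t)/2 := by
        intro t
        have := Real.cos_sq t
        have h2 := Real.sin_sq_add_cos_sq t
        linarith
      rw [Finset.sum_congr rfl (fun k _ => hsq _), Finset.sum_sub_distrib]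
      simp only [← Finset.sum_div]
      rw [hc2]
      simp [Finset.sum_const, Finset.card_range]
    rw [this]
    field_simp
    ring
  have hcov : vcov N x y = 0 := by
    unfold vcov
    rw [hmx, hmy]
    have : ∑ k ∈ Finset.range N, x k * y k = 0 := by
      have hxy : ∀ k : ℕ, x k * y k = R^2 * (Real.sin (2 * (2 * Real.pi * ((k:ℝ)+1) / N)) / 2) := by
        intro k
        simp only [x, y]
        rw [Real.sin_two_mul]
        ring
      rw [Finset.sum_congr rfl (fun k _ => hxy k), ← Finset.mul_sum, ← Finset.sum_div, hs2]
      simp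
    rw [this]
    simp
  have hexpr : vvar N x - (vcov N x y)^2 / vvar N y = R^2/2 := by
    rw [hcov, hvx]; simp
  have hexpr2 : vvar N y - (vcov N x y)^2 / vvar N x = R^2/2 := by
    rw [hcov, hvy]; simp
  have hsne : s ≠ 0 := ne_of_gt hs
  have key : σ ^ 2 * lam ^ 2 /
      (8 * Real.pi ^ 2 * P * (N : ℝ) * b ^ 2 * (R^2/2))
      = σ ^ 2 * lam ^ 2 * s ^ 2 / (Real.pi ^ 2 * P * b ^ 2 * Δ ^ 2 * (N : ℝ)) := by
    rw [hR]
    rw [div_pow]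
    field_simp
    ring
  constructor
  · unfold CRBu
    rw [hexpr, key]
  · unfold CRBv
    rw [hexpr2, key]
end

section
/- Fix reals A, Δ > 0. For each integer N with N > A/Δ + 1, let x^SC(N) ∈ ℝ^N be the trajectory of Theorem 2: with N_M = ⌈A/Δ⌉ − 1, N_L = ⌈(N − N_M)/2⌉, N_R = ⌊(N − N_M)/2⌋, set x^SC(N)_n = 0 for n ≤ N_L, x^SC(N)_n = (n − N_L)Δ for N_L < n ≤ N − N_R, and x^SC(N)_n = A for n > N − N_R. Then var(x^SC(N)) → A²/4 as N → ∞. Consequently, for positive constants σ, λ, P, b, N · CRB(x^SC(N)) = N·σ²λ²/(8π²PNb²var(x^SC(N))) converges to σ²λ²/(2π²Pb²A²), i.e. the space-constrained CRB decays at rate Θ(N^{−1}) with constant proportional to A^{−2}. -/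
/-!
The trajectory is `0` on its first `N_L` entries, a ramp `Δ, 2Δ, …, N_M Δ` whose length does not
depend on `N`, and `A` on its last `N_R ≈ N / 2` entries. Hence for every `f` with `f 0 = 0`,
`∑ f(x_k)` is a constant plus `N_R f(A)`, so the mean tends to `A / 2`, the mean square to
`A² / 2`, and the variance to `A² / 2 - A² / 4`. The CRB claim then follows by continuity of
division, the factor `N` cancelling.
-/

open Filter Finset Topology

/-- Entry `k` is the paper's `x_{k+1}`; with `M = N_M`, `(N - M + 1) / 2 = N_L` and
`(N - M) / 2 = N_R`. -/
def scTrajectory (A Δ : ℝ) (M N k : ℕ) : ℝ :=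
  if k + 1 ≤ (N - M + 1) / 2 then 0
  else if k + 1 ≤ N - (N - M) / 2 then ((k + 1 - (N - M + 1) / 2 : ℕ) : ℝ) * Δ
  else A

theorem sum_range_scTrajectory (A Δ : ℝ) {M N : ℕ} (hMN : M ≤ N) (f : ℝ → ℝ) (hf : f 0 = 0) :
    ∑ k ∈ range N, f (scTrajectory A Δ M N k) =
      ∑ j ∈ range M, f ((j + 1 : ℕ) * Δ) + ((N - M) / 2 : ℕ) * f A := by
  obtain ⟨L, R, hL, hR, rfl⟩ : ∃ L R, (N - M + 1) / 2 = L ∧ (N - M) / 2 = R ∧ N = L + M + R :=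
    ⟨_, _, rfl, rfl, by omega⟩
  simp only [scTrajectory, hL, hR, Nat.add_sub_cancel, sum_range_add]
  rw [sum_eq_zero fun k hk => by rw [if_pos (by simp at hk; omega), hf], zero_add]
  congr 1
  · refine sum_congr rfl fun j hj => ?_
    rw [mem_range] at hj
    rw [if_neg (by omega), if_pos (by omega), show L + j + 1 - L = j + 1 by omega]
  · rw [sum_congr rfl fun j _ => by rw [if_neg (by omega), if_neg (by omega)],
      sum_const, card_range, nsmul_eq_mul]

theorem tendsto_sub_div_two_div_atTop (M : ℕ) :
    Tendsto (fun N : ℕ => (((N - M) / 2 : ℕ) : ℝ) / N) atTop (𝓝 (1 / 2)) := by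
  have hlower : Tendsto (fun N : ℕ => 1 / 2 - ((M + 1) / 2 : ℝ) / N) atTop (𝓝 (1 / 2)) := by
    simpa using tendsto_const_nhds.sub (tendsto_const_div_atTop_nhds_zero_nat ((M + 1) / 2 : ℝ))
  refine tendsto_of_tendsto_of_tendsto_of_le_of_le' hlower tendsto_const_nhds ?_ ?_
  · filter_upwards [eventually_gt_atTop 0] with N hN
    have hN' : (0 : ℝ) < N := Nat.cast_pos.mpr hN
    have : (N : ℝ) ≤ 2 * ((N - M) / 2 : ℕ) + M + 1 := by
      exact_mod_cast (show N ≤ 2 * ((N - M) / 2) + M + 1 by omega)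
    rw [div_sub_div _ _ two_ne_zero hN'.ne', div_le_div_iff₀ (by positivity) hN']
    nlinarith
  · filter_upwards [eventually_gt_atTop 0] with N hN
    have : 2 * (((N - M) / 2 : ℕ) : ℝ) ≤ N := by
      exact_mod_cast (show 2 * ((N - M) / 2) ≤ N by omega)
    rw [div_le_iff₀ (Nat.cast_pos.mpr hN)]
    linarith

theorem tendsto_const_add_sub_div_two_mul_div_atTop (M : ℕ) (c d : ℝ) :
    Tendsto (fun N : ℕ => (d + ((N - M) / 2 : ℕ) * c) / N) atTop (𝓝 (c / 2)) := by
  have h := (tendsto_const_div_atTop_nhds_zero_nat d).add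
    ((tendsto_sub_div_two_div_atTop M).mul_const c)
  rw [zero_add, one_div_mul_eq_div] at h
  exact h.congr fun N => by ring

theorem tendsto_vvar_scTrajectory (A Δ : ℝ) (M : ℕ) :
    Tendsto (fun N => vvar N (scTrajectory A Δ M N)) atTop (𝓝 (A ^ 2 / 4)) := by
  have hmean : Tendsto (fun N => vmean N (scTrajectory A Δ M N)) atTop (𝓝 (A / 2)) := by
    refine (tendsto_const_add_sub_div_two_mul_div_atTop M A
      (∑ j ∈ range M, ((j + 1 : ℕ) : ℝ) * Δ)).congr' ?_
    filter_upwards [eventually_ge_atTop M] with N hN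
    rw [vmean, sum_range_scTrajectory A Δ hN (fun x => x) rfl]
  have hsq : Tendsto (fun N => (∑ k ∈ range N, scTrajectory A Δ M N k ^ 2) / N) atTop
      (𝓝 (A ^ 2 / 2)) := by
    refine (tendsto_const_add_sub_div_two_mul_div_atTop M (A ^ 2)
      (∑ j ∈ range M, (((j + 1 : ℕ) : ℝ) * Δ) ^ 2)).congr' ?_
    filter_upwards [eventually_ge_atTop M] with N hN
    rw [sum_range_scTrajectory A Δ hN (· ^ 2) (zero_pow two_ne_zero)]
  have h := hsq.sub (hmean.pow 2)
  rwa [show A ^ 2 / 2 - (A / 2) ^ 2 = A ^ 2 / 4 by ring] at h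

theorem sc_var_and_crb_scaling_general (A Δ σ lam P b : ℝ) (hA : 0 < A)
    (hP : 0 < P) (hb : 0 < b) :
    let NM : ℕ := (⌈A / Δ⌉).toNat - 1
    let xSC : ℕ → ℕ → ℝ := fun N k =>
      if k + 1 ≤ (N - NM + 1) / 2 then 0
      else if k + 1 ≤ N - (N - NM) / 2 then ((k + 1 - (N - NM + 1) / 2 : ℕ) : ℝ) * Δ
      else A
    Filter.Tendsto (fun N : ℕ => vvar N (xSC N)) Filter.atTop (nhds (A ^ 2 / 4)) ∧
      Filter.Tendsto
        (fun N : ℕ => (N : ℝ) *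
          (σ ^ 2 * lam ^ 2 / (8 * Real.pi ^ 2 * P * (N : ℝ) * b ^ 2 * vvar N (xSC N))))
        Filter.atTop
        (nhds (σ ^ 2 * lam ^ 2 / (2 * Real.pi ^ 2 * P * b ^ 2 * A ^ 2))) := by
  intro NM xSC
  have hvar : Tendsto (fun N => vvar N (xSC N)) atTop (𝓝 (A ^ 2 / 4)) :=
    tendsto_vvar_scTrajectory A Δ NM
  refine ⟨hvar, ?_⟩
  have hK : 8 * Real.pi ^ 2 * P * b ^ 2 * (A ^ 2 / 4) ≠ 0 := by positivity
  have hlim := (tendsto_const_nhds (x := σ ^ 2 * lam ^ 2)).div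
    (hvar.const_mul (8 * Real.pi ^ 2 * P * b ^ 2)) hK
  rw [show 8 * Real.pi ^ 2 * P * b ^ 2 * (A ^ 2 / 4) = 2 * Real.pi ^ 2 * P * b ^ 2 * A ^ 2 by ring]
    at hlim
  refine hlim.congr' ?_
  filter_upwards [eventually_ne_atTop 0] with N hN
  rw [Pi.div_apply]
  field_simp

/-- for fixed `A, Δ > 0`, the space-constrained optimal trajectories
`x^SC(N)` of Theorem 2 satisfy `var(x^SC(N)) → A²/4` as `N → ∞`, and consequently
`N · CRB(x^SC(N)) → σ²λ²/(2π²Pb²A²)`, i.e. the space-constrained CRB decays at rate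
`Θ(N⁻¹)` with constant proportional to `A⁻²`. -/
theorem sc_var_and_crb_scaling (A Δ σ lam P b : ℝ) (hA : 0 < A) (hΔ : 0 < Δ)
    (hσ : 0 < σ) (hlam : 0 < lam) (hP : 0 < P) (hb : 0 < b) :
    let NM : ℕ := (⌈A / Δ⌉).toNat - 1
    let xSC : ℕ → ℕ → ℝ := fun N k =>
      if k + 1 ≤ (N - NM + 1) / 2 then 0
      else if k + 1 ≤ N - (N - NM) / 2 then ((k + 1 - (N - NM + 1) / 2 : ℕ) : ℝ) * Δ
      else A
    Filter.Tendsto (fun N : ℕ => vvar N (xSC N)) Filter.atTop (nhds (A ^ 2 / 4)) ∧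
      Filter.Tendsto
        (fun N : ℕ => (N : ℝ) *
          (σ ^ 2 * lam ^ 2 / (8 * Real.pi ^ 2 * P * (N : ℝ) * b ^ 2 * vvar N (xSC N))))
        Filter.atTop
        (nhds (σ ^ 2 * lam ^ 2 / (2 * Real.pi ^ 2 * P * b ^ 2 * A ^ 2))) :=
  sc_var_and_crb_scaling_general A Δ σ lam P b hA hP hb
end
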